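/- Let T > 0, δ > 0, let ξ, ξ̃ : [0,∞) → ℝ be continuous, and let x be a real number with x > ξ_0 and x > ξ̃_0. Let g(x) and g̃(x) be the Loewner trajectories of x driven by ξ and ξ̃ respectively, and assume that their swallowing times exceed T and that g_t(x) − ξ_t ≥ δ and g̃_t(x) − ξ̃_t ≥ δ for all t ∈ [0,T]. Then sup_{t∈[0,T]} |(g_t(x) − ξ_t) − (g̃_t(x) − ξ̃_t)| ≤ ( sup_{t∈[0,T]} |ξ_t − ξ̃_t| ) · e^{4T/δ²}. -/

import Mathlib

/-!
The difference `F = g - g̃` vanishes at `0` and has right derivative `2/(g - ξ) - 2/(g̃ - ξ̃)`.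
Both gaps being at least `δ`, this derivative is bounded by
`(2/δ²)·|(g - ξ) - (g̃ - ξ̃)| ≤ (2/δ²)(|F| + M)` with `M = sup |ξ - ξ̃|`, so Grönwall gives
`|F t| ≤ M (e^{2t/δ²} - 1)`, whence `|(g_t - ξ_t) - (g̃_t - ξ̃_t)| ≤ |F t| + M ≤ M e^{2t/δ²}`.
-/
open MeasureTheory Filter Set

/-- `IsLoewnerTraj ξ x ζ g` says that `g` restricted to `[0, ζ)` is the maximal solution of the
real Loewner ODE `g_t = x + ∫₀ᵗ 2/(g_s − ξ_s) ds` with `g_t > ξ_t` for `t < ζ`;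
maximality means that if `ζ < ∞` then `liminf_{t → ζ⁻} (g_t − ξ_t) = 0`. -/
structure IsLoewnerTraj (ξ : ℝ → ℝ) (x : ℝ) (ζ : EReal) (g : ℝ → ℝ) : Prop where
  pos : 0 < ζ
  cont : ContinuousOn g {t : ℝ | 0 ≤ t ∧ (t : EReal) < ζ}
  gt : ∀ t : ℝ, 0 ≤ t → (t : EReal) < ζ → ξ t < g t
  ode : ∀ t : ℝ, 0 ≤ t → (t : EReal) < ζ →
    g t = x + ∫ s in (0:ℝ)..t, 2 / (g s - ξ s)
  maximal : ζ ≠ ⊤ →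
    Filter.liminf (fun t => g t - ξ t) (nhdsWithin ζ.toReal (Set.Iio ζ.toReal)) = 0

open Topology

theorem abs_inv_sub_inv_le {a b δ : ℝ} (hδ : 0 < δ) (ha : δ ≤ a) (hb : δ ≤ b) :
    |a⁻¹ - b⁻¹| ≤ |a - b| / δ ^ 2 := by
  have ha0 : 0 < a := hδ.trans_le ha
  have hb0 : 0 < b := hδ.trans_le hb
  rw [inv_sub_inv ha0.ne' hb0.ne', abs_div, abs_sub_comm, abs_of_pos (mul_pos ha0 hb0)]
  exact div_le_div_of_nonneg_left (abs_nonneg _) (by positivity)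
    (pow_two δ ▸ mul_le_mul ha hb hδ.le ha0.le)

theorem hasDerivWithinAt_Ici_integral_of_continuousOn {E : Type*} [NormedAddCommGroup E]
    [NormedSpace ℝ E] [CompleteSpace E] {f : ℝ → E} {a b t : ℝ}
    (hf : ContinuousOn f (Icc a b)) (ht : t ∈ Ico a b) :
    HasDerivWithinAt (fun u => ∫ s in a..u, f s) (f t) (Ici t) t := by
  have hnhds : Icc a b ∈ 𝓝[>] t := Icc_mem_nhdsGT_of_mem ht
  exact intervalIntegral.integral_hasDerivWithinAt_right
    ((hf.mono (Icc_subset_Icc_right ht.2.le)).intervalIntegrable_of_Icc ht.1)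
    ((hf.stronglyMeasurableAtFilter_nhdsWithin measurableSet_Icc t).filter_mono
      (nhdsWithin_le_of_mem hnhds))
    ((hf t (Ico_subset_Icc_self ht)).mono_of_mem_nhdsWithin hnhds)

theorem norm_le_mul_exp_sub_one_of_norm_deriv_right_le {E : Type*} [NormedAddCommGroup E]
    [NormedSpace ℝ E] {f f' : ℝ → E} {a b K M : ℝ}
    (hf : ContinuousOn f (Icc a b)) (hf' : ∀ t ∈ Ico a b, HasDerivWithinAt f (f' t) (Ici t) t)
    (ha : f a = 0) (hK : K ≠ 0) (bound : ∀ t ∈ Ico a b, ‖f' t‖ ≤ K * (‖f t‖ + M)) :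
    ∀ t ∈ Icc a b, ‖f t‖ ≤ M * (Real.exp (K * (t - a)) - 1) := by
  intro t ht
  have h := norm_le_gronwallBound_of_norm_deriv_right_le hf hf' (by simp [ha] : ‖f a‖ ≤ 0)
    (fun s hs => (bound s hs).trans_eq (mul_add K _ M)) t ht
  rw [gronwallBound_of_K_ne_0 hK] at h
  simpa [mul_div_cancel_left₀ M hK] using h

theorem Icc_subset_setOf_coe_lt {T : ℝ} {ζ : EReal} (hζ : (T : EReal) < ζ) :
    Icc 0 T ⊆ {t : ℝ | 0 ≤ t ∧ (t : EReal) < ζ} :=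
  fun _ ht => ⟨ht.1, (EReal.coe_le_coe_iff.2 ht.2).trans_lt hζ⟩

namespace IsLoewnerTraj

variable {ξ ξ' : ℝ → ℝ} {x T : ℝ} {ζ ζ' : EReal} {g g' : ℝ → ℝ}

theorem apply_zero (hL : IsLoewnerTraj ξ x ζ g) : g 0 = x := by
  simpa using hL.ode 0 le_rfl (by exact_mod_cast hL.pos)

theorem hasDerivWithinAt (hL : IsLoewnerTraj ξ x ζ g) (hξ : ContinuousOn ξ (Icc 0 T))
    (hζ : (T : EReal) < ζ) {t : ℝ} (ht : t ∈ Ico 0 T) :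
    HasDerivWithinAt g (2 / (g t - ξ t)) (Ici t) t := by
  have hsub := Icc_subset_setOf_coe_lt hζ
  have hcont : ContinuousOn (fun s => 2 / (g s - ξ s)) (Icc 0 T) :=
    continuousOn_const.div ((hL.cont.mono hsub).sub hξ)
      fun s hs => (sub_pos.2 (hL.gt s (hsub hs).1 (hsub hs).2)).ne'
  refine ((hasDerivWithinAt_Ici_integral_of_continuousOn hcont ht).const_add x)
    |>.congr_of_eventuallyEq ?_ ?_
  · filter_upwards [Icc_mem_nhdsGE_of_mem ht] with s hs using hL.ode s (hsub hs).1 (hsub hs).2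
  · exact hL.ode t (hsub (Ico_subset_Icc_self ht)).1 (hsub (Ico_subset_Icc_self ht)).2

theorem abs_sub_sub_le_mul_exp {δ M : ℝ}
    (hL : IsLoewnerTraj ξ x ζ g) (hL' : IsLoewnerTraj ξ' x ζ' g')
    (hξ : ContinuousOn ξ (Icc 0 T)) (hξ' : ContinuousOn ξ' (Icc 0 T))
    (hζ : (T : EReal) < ζ) (hζ' : (T : EReal) < ζ') (hδ : 0 < δ)
    (hlow : ∀ t ∈ Icc 0 T, δ ≤ g t - ξ t) (hlow' : ∀ t ∈ Icc 0 T, δ ≤ g' t - ξ' t)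
    (hM : ∀ t ∈ Icc 0 T, |ξ t - ξ' t| ≤ M) :
    ∀ t ∈ Icc 0 T, |(g t - ξ t) - (g' t - ξ' t)| ≤ M * Real.exp (2 / δ ^ 2 * t) := by
  have hgap : ∀ t ∈ Icc 0 T, |(g t - ξ t) - (g' t - ξ' t)| ≤ |g t - g' t| + M := fun t ht =>
    calc |(g t - ξ t) - (g' t - ξ' t)| = |(g t - g' t) - (ξ t - ξ' t)| := by ring_nf
      _ ≤ |g t - g' t| + |ξ t - ξ' t| := abs_sub _ _
      _ ≤ |g t - g' t| + M := add_le_add_right (hM t ht) _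
  have hderiv_le : ∀ t ∈ Ico 0 T,
      ‖2 / (g t - ξ t) - 2 / (g' t - ξ' t)‖ ≤ 2 / δ ^ 2 * (‖g t - g' t‖ + M) := by
    intro t ht
    have ht' := Ico_subset_Icc_self ht
    calc ‖2 / (g t - ξ t) - 2 / (g' t - ξ' t)‖
      _ = 2 * |(g t - ξ t)⁻¹ - (g' t - ξ' t)⁻¹| := by
          rw [Real.norm_eq_abs, div_eq_mul_inv, div_eq_mul_inv, ← mul_sub, abs_mul, abs_two]
      _ ≤ 2 * (|(g t - ξ t) - (g' t - ξ' t)| / δ ^ 2) := by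
          gcongr; exact abs_inv_sub_inv_le hδ (hlow t ht') (hlow' t ht')
      _ ≤ 2 * ((|g t - g' t| + M) / δ ^ 2) := by gcongr; exact hgap t ht'
      _ = 2 / δ ^ 2 * (‖g t - g' t‖ + M) := by rw [Real.norm_eq_abs]; ring
  have hcont : ContinuousOn (fun t => g t - g' t) (Icc 0 T) :=
    (hL.cont.mono (Icc_subset_setOf_coe_lt hζ)).sub (hL'.cont.mono (Icc_subset_setOf_coe_lt hζ'))
  have hgronwall := norm_le_mul_exp_sub_one_of_norm_deriv_right_le hcont
    (fun t ht => (hL.hasDerivWithinAt hξ hζ ht).sub (hL'.hasDerivWithinAt hξ' hζ' ht))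
    (by simp [hL.apply_zero, hL'.apply_zero]) (by positivity) hderiv_le
  intro t ht
  calc |(g t - ξ t) - (g' t - ξ' t)| ≤ |g t - g' t| + M := hgap t ht
    _ ≤ M * (Real.exp (2 / δ ^ 2 * (t - 0)) - 1) + M := by
        gcongr; simpa using hgronwall t ht
    _ = M * Real.exp (2 / δ ^ 2 * t) := by ring_nf

end IsLoewnerTraj

theorem stmt5_general
    (T δ : ℝ) (hδ : 0 < δ)
    (ξ ξ' : ℝ → ℝ) (hc : ContinuousOn ξ (Set.Ici 0)) (hc' : ContinuousOn ξ' (Set.Ici 0))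
    (x : ℝ)
    (ζ ζ' : EReal) (g g' : ℝ → ℝ)
    (hL : IsLoewnerTraj ξ x ζ g) (hL' : IsLoewnerTraj ξ' x ζ' g')
    (hζ : (T : EReal) < ζ) (hζ' : (T : EReal) < ζ')
    (hlow : ∀ t ∈ Set.Icc 0 T, δ ≤ g t - ξ t)
    (hlow' : ∀ t ∈ Set.Icc 0 T, δ ≤ g' t - ξ' t) :
    ∀ t ∈ Set.Icc 0 T,
      |(g t - ξ t) - (g' t - ξ' t)|
        ≤ sSup ((fun s => |ξ s - ξ' s|) '' Set.Icc 0 T) * Real.exp (4 * T / δ ^ 2) := by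
  intro t ht
  have hξ : ContinuousOn ξ (Icc 0 T) := hc.mono Icc_subset_Ici_self
  have hξ' : ContinuousOn ξ' (Icc 0 T) := hc'.mono Icc_subset_Ici_self
  set M := sSup ((fun s => |ξ s - ξ' s|) '' Set.Icc 0 T)
  have hM : ∀ s ∈ Icc 0 T, |ξ s - ξ' s| ≤ M := fun _ hs =>
    (hξ.sub hξ').abs.le_sSup_image_Icc hs
  have hM0 : 0 ≤ M := (abs_nonneg _).trans (hM t ht)
  have hexponent : 2 / δ ^ 2 * t ≤ 4 * T / δ ^ 2 := by
    rw [div_mul_eq_mul_div]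
    exact div_le_div_of_nonneg_right (by linarith [ht.1, ht.2]) (by positivity)
  calc |(g t - ξ t) - (g' t - ξ' t)| ≤ M * Real.exp (2 / δ ^ 2 * t) :=
        hL.abs_sub_sub_le_mul_exp hL' hξ hξ' hζ hζ' hδ hlow hlow' hM t ht
    _ ≤ M * Real.exp (4 * T / δ ^ 2) := by gcongr

/-- Grönwall-type stability of Loewner trajectories: if both trajectories stay at distance
at least `δ` above their driving functions on `[0,T]`, then
`sup_{[0,T]} |(g_t(x) − ξ_t) − (g̃_t(x) − ξ̃_t)| ≤ sup_{[0,T]} |ξ_t − ξ̃_t| · e^{4T/δ²}`. -/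
theorem stmt5
    (T δ : ℝ) (hT : 0 < T) (hδ : 0 < δ)
    (ξ ξ' : ℝ → ℝ) (hc : ContinuousOn ξ (Set.Ici 0)) (hc' : ContinuousOn ξ' (Set.Ici 0))
    (x : ℝ) (hx : ξ 0 < x) (hx' : ξ' 0 < x)
    (ζ ζ' : EReal) (g g' : ℝ → ℝ)
    (hL : IsLoewnerTraj ξ x ζ g) (hL' : IsLoewnerTraj ξ' x ζ' g')
    (hζ : (T : EReal) < ζ) (hζ' : (T : EReal) < ζ')
    (hlow : ∀ t ∈ Set.Icc 0 T, δ ≤ g t - ξ t)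
    (hlow' : ∀ t ∈ Set.Icc 0 T, δ ≤ g' t - ξ' t) :
    ∀ t ∈ Set.Icc 0 T,
      |(g t - ξ t) - (g' t - ξ' t)|
        ≤ sSup ((fun s => |ξ s - ξ' s|) '' Set.Icc 0 T) * Real.exp (4 * T / δ ^ 2) :=
  stmt5_general T δ hδ ξ ξ' hc hc' x ζ ζ' g g' hL hL' hζ hζ' hlow hlow'
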